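/- arXiv:1208.0615 — 7 statements merged into one kernel-verified Lean document; each statement's English description precedes it below -/
import Mathlib

section
/- Let G be a simple graph on a finite vertex type V with m edges, and let ≺ be a linear order on V such that u ≺ v implies deg(u) ≤ deg(v) (nodes appear in nondecreasing order of degree). Then the number of ordered triples (u, v, w) of vertices with u ≠ w, v ≺ u, v ≺ w, and such that both {v, u} and {v, w} are edges of G, is at most 3 · m · √m. -/
open Finset

variable {V : Type} [Fintype V] [LinearOrder V]
    (G : SimpleGraph V) [DecidableRel G.Adj] [DecidableEq V]

private def upN (v : V) : Finset V := (G.neighborFinset v).filter (fun u => v < u)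

private lemma sum_upN : ∑ v : V, (upN G v).card = G.edgeFinset.card := by
  classical
  have hdisj : ∀ x ∈ (univ : Finset V), ∀ y ∈ (univ : Finset V), x ≠ y →
      Disjoint ((upN G x).image (fun u => s(x, u))) ((upN G y).image (fun u => s(y, u))) := by
    intro x _ y _ hxy
    rw [Finset.disjoint_left]
    rintro e he he'
    simp only [Finset.mem_image, upN, Finset.mem_filter, SimpleGraph.mem_neighborFinset] at he he'
    obtain ⟨u, ⟨_, hxu⟩, rfl⟩ := he
    obtain ⟨u', ⟨_, hyu⟩, he⟩ := he'
    rw [Sym2.eq_iff] at he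
    rcases he with ⟨rfl, rfl⟩ | ⟨rfl, rfl⟩
    · exact hxy rfl
    · exact absurd (hxu.trans hyu) (lt_irrefl _)
  have hbu : (univ : Finset V).biUnion (fun v => (upN G v).image (fun u => s(v, u))) =
      G.edgeFinset := by
    ext e
    induction e with
    | _ a b =>
      simp only [Finset.mem_biUnion, Finset.mem_image, Finset.mem_univ, true_and,
        SimpleGraph.mem_edgeFinset, SimpleGraph.mem_edgeSet, upN, Finset.mem_filter,
        SimpleGraph.mem_neighborFinset]
      constructor
      · rintro ⟨v, u, ⟨hadj, _⟩, he⟩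
        rw [Sym2.eq_iff] at he
        rcases he with ⟨rfl, rfl⟩ | ⟨rfl, rfl⟩
        · exact hadj
        · exact hadj.symm
      · intro hab
        rcases lt_or_gt_of_ne hab.ne with h | h
        · exact ⟨a, b, ⟨hab, h⟩, rfl⟩
        · exact ⟨b, a, ⟨hab.symm, h⟩, Sym2.eq_swap⟩
  calc ∑ v : V, (upN G v).card
      = ∑ v : V, ((upN G v).image (fun u => s(v, u))).card := by
        refine Finset.sum_congr rfl fun v _ => ?_
        rw [Finset.card_image_of_injective _ ?_]
        intro a b hab
        exact (Sym2.congr_right).mp hab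
    _ = ((univ : Finset V).biUnion (fun v => (upN G v).image (fun u => s(v, u)))).card :=
        (Finset.card_biUnion hdisj).symm
    _ = G.edgeFinset.card := by rw [hbu]

private lemma count_le :
    (Finset.univ.filter (fun t : V × V × V =>
        t.1 ≠ t.2.2 ∧ t.2.1 < t.1 ∧ t.2.1 < t.2.2 ∧
        G.Adj t.2.1 t.1 ∧ G.Adj t.2.1 t.2.2)).card ≤
      ∑ v : V, (upN G v).card * (upN G v).card := by
  classical
  have hsub : (Finset.univ.filter (fun t : V × V × V =>
        t.1 ≠ t.2.2 ∧ t.2.1 < t.1 ∧ t.2.1 < t.2.2 ∧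
        G.Adj t.2.1 t.1 ∧ G.Adj t.2.1 t.2.2)) ⊆
      (univ : Finset V).biUnion (fun v =>
        ((upN G v) ×ˢ (upN G v)).image (fun p => (p.1, v, p.2))) := by
    rintro ⟨u, v, w⟩ ht
    simp only [Finset.mem_filter, Finset.mem_univ, true_and] at ht
    obtain ⟨hne, hvu, hvw, hadj1, hadj2⟩ := ht
    simp only [Finset.mem_biUnion, Finset.mem_image, Finset.mem_univ, true_and,
      Finset.mem_product, upN, Finset.mem_filter, SimpleGraph.mem_neighborFinset]
    exact ⟨v, (u, w), ⟨⟨hadj1, hvu⟩, ⟨hadj2, hvw⟩⟩, rfl⟩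
  have hdisj : ∀ x ∈ (univ : Finset V), ∀ y ∈ (univ : Finset V), x ≠ y →
      Disjoint (((upN G x) ×ˢ (upN G x)).image (fun p => (p.1, x, p.2)))
               (((upN G y) ×ˢ (upN G y)).image (fun p => (p.1, y, p.2))) := by
    intro x _ y _ hxy
    rw [Finset.disjoint_left]
    rintro t ht ht'
    simp only [Finset.mem_image] at ht ht'
    obtain ⟨p, _, rfl⟩ := ht
    obtain ⟨q, _, hq⟩ := ht'
    exact hxy (congrArg (fun z => z.2.1) hq).symm
  calc _ ≤ ((univ : Finset V).biUnion (fun v =>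
        ((upN G v) ×ˢ (upN G v)).image (fun p => (p.1, v, p.2)))).card :=
        Finset.card_le_card hsub
    _ = ∑ v : V, (((upN G v) ×ˢ (upN G v)).image (fun p => (p.1, v, p.2))).card :=
        Finset.card_biUnion hdisj
    _ ≤ ∑ v : V, (upN G v).card * (upN G v).card := by
        refine Finset.sum_le_sum fun v _ => ?_
        calc _ ≤ ((upN G v) ×ˢ (upN G v)).card := Finset.card_image_le
          _ = _ := Finset.card_product _ _

/-- If the vertices of a graph `G` with `m` edges are linearly ordered so that the
order is nondecreasing in degree, then the number of properly ordered 2-paths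
`u - v - w` (with `u ≠ w`, `v < u`, `v < w`, and both `{v,u}` and `{v,w}` edges)
is at most `3·m·√m`. -/
theorem stmt_7 {V : Type} [Fintype V] [LinearOrder V]
    (G : SimpleGraph V) [DecidableRel G.Adj] [DecidableEq V]
    (hdeg : ∀ u v : V, u < v → G.degree u ≤ G.degree v) :
    (Nat.card {t : V × V × V //
        t.1 ≠ t.2.2 ∧ t.2.1 < t.1 ∧ t.2.1 < t.2.2 ∧
        G.Adj t.2.1 t.1 ∧ G.Adj t.2.1 t.2.2} : ℝ) ≤
      3 * (G.edgeFinset.card : ℝ) * Real.sqrt (G.edgeFinset.card) := by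
  classical
  set m : ℕ := G.edgeFinset.card with hm
  have hsqrt : Real.sqrt m * Real.sqrt m = m := Real.mul_self_sqrt (by positivity)
  have hcard : (Nat.card {t : V × V × V //
        t.1 ≠ t.2.2 ∧ t.2.1 < t.1 ∧ t.2.1 < t.2.2 ∧
        G.Adj t.2.1 t.1 ∧ G.Adj t.2.1 t.2.2}) =
      (Finset.univ.filter (fun t : V × V × V =>
        t.1 ≠ t.2.2 ∧ t.2.1 < t.1 ∧ t.2.1 < t.2.2 ∧
        G.Adj t.2.1 t.1 ∧ G.Adj t.2.1 t.2.2)).card := by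
    rw [Nat.card_eq_fintype_card, Fintype.card_subtype]
  -- key bound on upN card
  have hup : ∀ v : V, ((upN G v).card : ℝ) ≤ 2 * Real.sqrt m := by
    intro v
    by_cases hv : (G.degree v : ℝ) ≤ Real.sqrt m
    · have h1 : ((upN G v).card : ℝ) ≤ (G.degree v : ℝ) := by
        exact_mod_cast Finset.card_le_card (Finset.filter_subset _ _)
      have : (0:ℝ) ≤ Real.sqrt m := Real.sqrt_nonneg _
      nlinarith
    · push_neg at hv
      -- all up-neighbors have degree > sqrt m
      set H : Finset V := univ.filter (fun u => Real.sqrt m < (G.degree u : ℝ)) with hH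
      have hsubH : upN G v ⊆ H := by
        intro u hu
        simp only [upN, Finset.mem_filter, SimpleGraph.mem_neighborFinset] at hu
        simp only [hH, Finset.mem_filter, Finset.mem_univ, true_and]
        exact lt_of_lt_of_le hv (by exact_mod_cast hdeg v u hu.2)
      have hHcard : (H.card : ℝ) * Real.sqrt m ≤ 2 * m := by
        have h1 : (H.card : ℝ) * Real.sqrt m ≤ ∑ u ∈ H, (G.degree u : ℝ) := by
          rw [Finset.card_eq_sum_ones H]
          push_cast
          rw [Finset.sum_mul]
          refine Finset.sum_le_sum fun u hu => ?_
          simp only [hH, Finset.mem_filter] at hu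
          linarith [hu.2]
        have h2 : ∑ u ∈ H, (G.degree u : ℝ) ≤ ∑ u : V, (G.degree u : ℝ) := by
          refine Finset.sum_le_sum_of_subset_of_nonneg (Finset.subset_univ _) ?_
          intro u _ _; positivity
        have h3 : ∑ u : V, (G.degree u : ℝ) = 2 * m := by
          have := G.sum_degrees_eq_twice_card_edges
          rw [hm]
          exact_mod_cast congrArg (Nat.cast (R := ℝ)) this
        linarith
      have hdv : 0 < G.degree v := by
        have h0 : (0:ℝ) < (G.degree v : ℝ) := lt_of_le_of_lt (Real.sqrt_nonneg _) hv
        exact_mod_cast h0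
      have hm1 : 0 < m := by
        rcases Nat.eq_zero_or_pos m with h0 | h0
        · exfalso
          have h2m := G.sum_degrees_eq_twice_card_edges
          have hle : G.degree v ≤ ∑ u : V, G.degree u :=
            Finset.single_le_sum (f := fun u => G.degree u) (fun u _ => Nat.zero_le _) (Finset.mem_univ v)
          rw [h2m, ← hm, h0] at hle
          omega
        · exact h0
      have hmpos : 0 < Real.sqrt m := Real.sqrt_pos.mpr (by exact_mod_cast hm1)
      have hHle : (H.card : ℝ) ≤ 2 * Real.sqrt m := by
        have h4 : (H.card : ℝ) * Real.sqrt m ≤ (2 * Real.sqrt m) * Real.sqrt m := by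
          rw [mul_assoc, hsqrt]
          exact hHcard
        exact le_of_mul_le_mul_right h4 hmpos
      calc ((upN G v).card : ℝ) ≤ (H.card : ℝ) := by
            exact_mod_cast Finset.card_le_card hsubH
        _ ≤ 2 * Real.sqrt m := hHle
  have hsum : ∑ v : V, ((upN G v).card : ℝ) = m := by
    rw [hm, ← sum_upN G]
    norm_num
  rw [hcard]
  have h1 : ((Finset.univ.filter (fun t : V × V × V =>
        t.1 ≠ t.2.2 ∧ t.2.1 < t.1 ∧ t.2.1 < t.2.2 ∧
        G.Adj t.2.1 t.1 ∧ G.Adj t.2.1 t.2.2)).card : ℝ) ≤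
      ∑ v : V, ((upN G v).card : ℝ) * ((upN G v).card : ℝ) := by
    have := count_le G
    push_cast
    exact_mod_cast this
  have h2 : ∑ v : V, ((upN G v).card : ℝ) * ((upN G v).card : ℝ) ≤
      ∑ v : V, ((upN G v).card : ℝ) * (2 * Real.sqrt m) := by
    refine Finset.sum_le_sum fun v _ => ?_
    have := hup v
    have h0 : (0:ℝ) ≤ ((upN G v).card : ℝ) := by positivity
    nlinarith
  have h3 : ∑ v : V, ((upN G v).card : ℝ) * (2 * Real.sqrt m) = 2 * Real.sqrt m * m := by
    rw [← Finset.sum_mul, hsum]; ring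
  have hs : (0:ℝ) ≤ Real.sqrt m := Real.sqrt_nonneg _
  have hm0 : (0:ℝ) ≤ (m:ℝ) := by positivity
  calc ((Finset.univ.filter _).card : ℝ) ≤ _ := h1
    _ ≤ _ := h2
    _ = 2 * Real.sqrt m * m := h3
    _ ≤ 3 * (m:ℝ) * Real.sqrt m := by nlinarith
end

section
/- For every integer k ≥ 1 there exists a constant C > 0 such that for every finite simple graph G with m edges, the number of injective graph homomorphisms from the cycle graph on 2k+1 vertices into G is at most C · m^k · √m. -/
/-!
A homomorphism from the cycle `C_n` into `G` is determined by the closed walk of length `n` it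
traces in `G`, so there are at most `tr (A ^ n)` of them, `A` being the adjacency matrix of `G`.
For `n ≥ 2`, Cauchy–Schwarz gives `tr (A * A ^ (n - 1)) ≤ ‖A‖ * ‖A ^ (n - 1)‖` in the Frobenius
norm, and submultiplicativity of that norm then gives `tr (A ^ n) ≤ ‖A‖ ^ n = (2 m) ^ (n / 2)`.
-/

/-- The cycle graph on `ZMod n`: `i` is adjacent to `i + 1` and `i - 1`. -/
def cycleGraphZMod (n : ℕ) : SimpleGraph (ZMod n) :=
  SimpleGraph.fromRel (fun i j => j = i + 1)

open SimpleGraph Finset Matrix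

attribute [local instance] Matrix.frobeniusNormedAddCommGroup Matrix.frobeniusNormedRing

namespace Matrix

variable {m n : Type*} [Fintype m] [Fintype n]

theorem frobenius_norm_eq_sqrt (A : Matrix m n ℝ) : ‖A‖ = √(∑ i, ∑ j, A i j ^ 2) := by
  simp only [frobenius_norm_def, Real.rpow_two, Real.norm_eq_abs, sq_abs, Real.sqrt_eq_rpow]

theorem trace_mul_le_frobenius_norm_mul (A : Matrix m n ℝ) (B : Matrix n m ℝ) :
    trace (A * B) ≤ ‖A‖ * ‖B‖ := by
  rw [← frobenius_norm_transpose B, frobenius_norm_eq_sqrt, frobenius_norm_eq_sqrt]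
  simp only [trace, diag_apply, mul_apply, ← Fintype.sum_prod_type']
  exact Real.sum_mul_le_sqrt_mul_sqrt _ (fun x : m × n => A x.1 x.2) (fun x => Bᵀ x.1 x.2)

theorem frobenius_norm_sq_eq_trace (A : Matrix m n ℝ) : ‖A‖ ^ 2 = trace (A * Aᵀ) := by
  rw [frobenius_norm_eq_sqrt, Real.sq_sqrt (by positivity)]
  simp [trace, mul_apply, sq]

theorem trace_pow_le_frobenius_norm_pow [DecidableEq n] (A : Matrix n n ℝ) {p : ℕ} (hp : 2 ≤ p) :
    trace (A ^ p) ≤ ‖A‖ ^ p := by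
  obtain ⟨q, rfl⟩ : ∃ q, p = 1 + (q + 1) := ⟨p - 2, by omega⟩
  calc trace (A ^ (1 + (q + 1))) = trace (A ^ 1 * A ^ (q + 1)) := by rw [pow_add]
    _ ≤ ‖A ^ 1‖ * ‖A ^ (q + 1)‖ := trace_mul_le_frobenius_norm_mul _ _
    _ ≤ ‖A‖ ^ 1 * ‖A‖ ^ (q + 1) := by
        gcongr
        exacts [norm_pow_le' _ one_pos, norm_pow_le' _ q.succ_pos]
    _ = ‖A‖ ^ (1 + (q + 1)) := (pow_add _ _ _).symm

end Matrix

namespace SimpleGraph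

variable {V W : Type*} [Fintype V] [DecidableEq V] (G : SimpleGraph V) [DecidableRel G.Adj]

theorem frobenius_norm_adjMatrix_sq : ‖G.adjMatrix ℝ‖ ^ 2 = 2 * #G.edgeFinset := by
  rw [frobenius_norm_sq_eq_trace, transpose_adjMatrix]
  simp only [trace, diag_apply, adjMatrix_mul_self_apply_self]
  exact_mod_cast G.sum_degrees_eq_twice_card_edges

theorem card_hom_le_trace_adjMatrix_pow {α : Type*} [Semiring α] [PartialOrder α] [IsOrderedRing α]
    {H : SimpleGraph W} {w : W} (c : H.Walk w w) (hc : ∀ x, x ∈ c.support) :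
    (Nat.card (H →g G) : α) ≤ trace (G.adjMatrix α ^ c.length) := by
  let toClosedWalk (f : H →g G) : Σ u : V, {p : G.Walk u u | p.length = c.length} :=
    ⟨f w, c.map f, c.length_map f⟩
  have hinj : Function.Injective toClosedWalk := by
    intro f g hfg
    have hsupp : (c.map f).support = (c.map g).support :=
      congrArg (fun s : Σ u : V, {p : G.Walk u u | p.length = c.length} => s.2.1.support) hfg
    rw [Walk.support_map, Walk.support_map, List.map_inj_left] at hsupp
    exact DFunLike.ext f g fun x => hsupp x (hc x)
  calc (Nat.card (H →g G) : α)
      ≤ (Nat.card (Σ u : V, {p : G.Walk u u | p.length = c.length}) : α) :=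
        Nat.mono_cast (Nat.card_le_card_of_injective _ hinj)
    _ = trace (G.adjMatrix α ^ c.length) := by
        simp [trace, adjMatrix_pow_apply_eq_card_walk, Nat.card_eq_fintype_card]

end SimpleGraph

namespace cycleGraphZMod

variable {n : ℕ}

theorem adj_add_one [Fact (1 < n)] (a : ZMod n) : (cycleGraphZMod n).Adj a (a + 1) := by
  rw [cycleGraphZMod, fromRel_adj]
  exact ⟨fun h => one_ne_zero (left_eq_add.mp h), Or.inl rfl⟩

theorem exists_walk_zero_natCast [Fact (1 < n)] (j : ℕ) :
    ∃ p : (cycleGraphZMod n).Walk 0 j, p.length = j ∧ ∀ i ≤ j, (i : ZMod n) ∈ p.support := by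
  induction j with
  | zero => exact ⟨Walk.nil.copy rfl Nat.cast_zero.symm, by simp⟩
  | succ j ih =>
    obtain ⟨p, hlen, hsupp⟩ := ih
    refine ⟨p.concat (by simpa using adj_add_one (j : ZMod n)), by simp [hlen], fun i hi => ?_⟩
    rcases Nat.le_succ_iff.mp hi with hi | rfl
    · simp [hsupp i hi]
    · simp

theorem exists_spanning_closedWalk (hn : 1 < n) :
    ∃ c : (cycleGraphZMod n).Walk 0 0, c.length = n ∧ ∀ x, x ∈ c.support := by
  have : Fact (1 < n) := ⟨hn⟩
  obtain ⟨p, hlen, hsupp⟩ := exists_walk_zero_natCast (n := n) n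
  refine ⟨p.copy rfl (ZMod.natCast_self n), by simpa using hlen, fun x => ?_⟩
  rw [Walk.support_copy, ← ZMod.natCast_zmod_val x]
  exact hsupp _ (ZMod.val_lt x).le

end cycleGraphZMod

/-- For every `k ≥ 1` there is a constant `C > 0` such that every finite simple
graph `G` with `m` edges admits at most `C · m^k · √m` injective graph
homomorphisms from the cycle on `2k + 1` vertices. -/
theorem stmt_8 (k : ℕ) (hk : 1 ≤ k) :
    ∃ C : ℝ, 0 < C ∧
      ∀ (V : Type) (_ : Fintype V) (_ : DecidableEq V)
        (G : SimpleGraph V) (_ : DecidableRel G.Adj),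
        (Nat.card {f : cycleGraphZMod (2 * k + 1) →g G // Function.Injective f} : ℝ) ≤
          C * (G.edgeFinset.card : ℝ) ^ k * Real.sqrt (G.edgeFinset.card) := by
  refine ⟨2 ^ k * √2, by positivity, fun V _ _ G _ => ?_⟩
  obtain ⟨c, hlen, hc⟩ := cycleGraphZMod.exists_spanning_closedWalk (n := 2 * k + 1) (by omega)
  have hnorm : ‖G.adjMatrix ℝ‖ = √(2 * #G.edgeFinset) := by
    rw [← G.frobenius_norm_adjMatrix_sq, Real.sqrt_sq (norm_nonneg _)]
  calc (Nat.card {f : cycleGraphZMod (2 * k + 1) →g G // Function.Injective f} : ℝ)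
      ≤ Nat.card (cycleGraphZMod (2 * k + 1) →g G) := by exact_mod_cast Finite.card_subtype_le _
    _ ≤ trace (G.adjMatrix ℝ ^ c.length) := G.card_hom_le_trace_adjMatrix_pow c hc
    _ ≤ ‖G.adjMatrix ℝ‖ ^ c.length := trace_pow_le_frobenius_norm_pow _ (by omega)
    _ = 2 ^ k * √2 * #G.edgeFinset ^ k * √(#G.edgeFinset) := by
        rw [hlen, hnorm, pow_succ, pow_mul, Real.sq_sqrt (by positivity), Real.sqrt_mul zero_le_two]
        ring
end

section
/- Let S be a connected simple graph on a finite vertex type with p ≥ 2 vertices, and let G be a finite simple graph with m edges in which every vertex has degree at most Δ. Then the number of injective graph homomorphisms from S to G is at most 2 · m · Δ^{p−2}. -/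
open Finset

/-- Walk exit lemma. -/
lemma walk_exit {V : Type} {S : SimpleGraph V} (P : V → Prop) :
    ∀ {a b : V} (_w : S.Walk a b), P a → ¬ P b → ∃ x y, P x ∧ ¬ P y ∧ S.Adj x y := by
  intro a b w
  induction w with
  | nil => exact fun h1 h2 => absurd h1 h2
  | @cons u v b h q ih =>
    intro ha hb
    by_cases hc : P v
    · exact ih hc hb
    · exact ⟨u, v, ha, hc, h⟩

/-- Existence of a "connected ordering" prefix of length n. -/
lemma exists_order {V : Type} [Fintype V] (S : SimpleGraph V) (hconn : S.Connected) :
    ∀ n, 1 ≤ n → n ≤ Fintype.card V →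
      ∃ g : Fin n → V, Function.Injective g ∧
        ∀ i : Fin n, 1 ≤ (i : ℕ) → ∃ j : Fin n, j < i ∧ S.Adj (g j) (g i) := by
  intro n
  induction n with
  | zero => omega
  | succ n ih =>
    intro _ hle
    rcases Nat.eq_zero_or_pos n with rfl | hn1
    · have : Nonempty V := hconn.nonempty
      refine ⟨fun _ => Classical.arbitrary V, fun a b _ => Fin.ext (by omega), ?_⟩
      intro i hi
      have := i.isLt; omega
    · obtain ⟨g, hginj, hgprop⟩ := ih hn1 (le_of_lt hle)
      -- find v outside the range
      have hv : ∃ v : V, v ∉ Set.range g := by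
        by_contra hconta
        push_neg at hconta
        have hsurj : Function.Surjective g := fun v => hconta v
        have := Fintype.card_le_of_surjective g hsurj
        simp at this
        omega
      obtain ⟨v, hv⟩ := hv
      have ha : g ⟨0, hn1⟩ ∈ Set.range g := ⟨_, rfl⟩
      obtain ⟨w⟩ := (hconn (g ⟨0, hn1⟩) v)
      obtain ⟨x, y, hx, hy, hxy⟩ := walk_exit (· ∈ Set.range g) w ha hv
      refine ⟨Fin.snoc g y, ?_, ?_⟩
      · intro a b hab
        rcases Fin.eq_castSucc_or_eq_last a with ⟨a', rfl⟩ | rfl <;>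
          rcases Fin.eq_castSucc_or_eq_last b with ⟨b', rfl⟩ | rfl
        · simp only [Fin.snoc_castSucc] at hab
          exact congrArg Fin.castSucc (hginj hab)
        · simp only [Fin.snoc_castSucc, Fin.snoc_last] at hab
          exact absurd ⟨a', hab⟩ hy
        · simp only [Fin.snoc_castSucc, Fin.snoc_last] at hab
          exact absurd ⟨b', hab.symm⟩ hy
        · rfl
      · intro i hi
        rcases Fin.eq_castSucc_or_eq_last i with ⟨i', rfl⟩ | rfl
        · have hi' : 1 ≤ (i' : ℕ) := by simpa using hi
          obtain ⟨j, hj, hadj⟩ := hgprop i' hi'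
          exact ⟨j.castSucc, by simpa using hj, by simpa [Fin.snoc_castSucc] using hadj⟩
        · obtain ⟨jx, rfl⟩ := hx
          exact ⟨jx.castSucc, Fin.castSucc_lt_last jx,
            by simp [Fin.snoc_castSucc, Fin.snoc_last, hxy]⟩

/-- Counting lemma: tuples where each later coordinate is adjacent to an earlier one. -/
lemma count_lemma {W : Type} [Fintype W] [DecidableEq W] (G : SimpleGraph W)
    [DecidableRel G.Adj] (Δ : ℕ) (hΔ : ∀ v : W, G.degree v ≤ Δ)
    (r : ℕ → ℕ) (hr : ∀ i, 1 ≤ i → r i < i) :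
    ∀ k, (Finset.univ.filter (fun h : Fin (k + 2) → W =>
        ∀ i : Fin (k + 2), 1 ≤ (i : ℕ) → ∀ j : Fin (k + 2), (j : ℕ) = r (i : ℕ) →
          G.Adj (h j) (h i))).card
        ≤ 2 * G.edgeFinset.card * Δ ^ k := by
  intro k
  induction k with
  | zero =>
    simp only [pow_zero, mul_one]
    have hT : (Finset.univ.filter (fun pq : W × W => G.Adj pq.1 pq.2)).card
        = 2 * G.edgeFinset.card := by
      rw [← SimpleGraph.dart_card_eq_twice_card_edges, ← Fintype.card_coe]
      exact Fintype.card_congr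
        { toFun := fun pq => ⟨(pq.1.1, pq.1.2), (Finset.mem_filter.mp pq.2).2⟩
          invFun := fun d => ⟨(d.fst, d.snd),
            Finset.mem_filter.mpr ⟨Finset.mem_univ _, d.adj⟩⟩
          left_inv := fun pq => Subtype.ext rfl
          right_inv := fun d => SimpleGraph.Dart.ext _ _ rfl }
    rw [← hT]
    apply Finset.card_le_card_of_injOn (fun h => (h 0, h 1))
    · intro h hs
      simp only [Finset.mem_filter, Finset.mem_univ, true_and, Finset.mem_coe] at hs ⊢
      have hr1 : r 1 = 0 := by have := hr 1 le_rfl; omega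
      exact hs 1 (by norm_num) 0 (by simp [hr1])
    · intro h _ h' _ heq
      have h0 : h 0 = h' 0 := congrArg Prod.fst heq
      have h1 : h 1 = h' 1 := congrArg Prod.snd heq
      funext i
      fin_cases i
      · exact h0
      · exact h1
  | succ k ihn =>
    have hn : 2 ≤ k + 2 := Nat.le_add_left 2 k
    set n := k + 2 with hndef
    set π : (Fin (n + 1) → W) → (Fin n → W) := fun h => h ∘ Fin.castSucc with hπ
    set s' := (Finset.univ.filter (fun h : Fin (n+1) → W =>
        ∀ i : Fin (n+1), 1 ≤ (i : ℕ) → ∀ j : Fin (n+1), (j : ℕ) = r (i : ℕ) →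
          G.Adj (h j) (h i))) with hs'
    have hrn : r n < n := hr n (le_trans one_le_two hn)
    have key : s'.card ≤ Δ * (s'.image π).card := by
      apply Finset.card_le_mul_card_image
      intro g hg
      apply le_trans (Finset.card_le_card_of_injOn (fun h => h (Fin.last n))
        (t := G.neighborFinset (g ⟨r n, hrn⟩)) ?_ ?_)
      · rw [SimpleGraph.card_neighborFinset_eq_degree]
        exact hΔ (g ⟨r n, hrn⟩)
      · intro h hh
        simp only [Finset.mem_coe, Finset.mem_filter, hs', Finset.mem_univ, true_and] at hh
        obtain ⟨hcond, hπh⟩ := hh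
        have hlast := hcond (Fin.last n) (by simp only [Fin.val_last]; exact le_trans one_le_two hn)
          ⟨r n, lt_trans hrn (Nat.lt_succ_self n)⟩ (by simp [Fin.last])
        have hval : h ⟨r n, lt_trans hrn (Nat.lt_succ_self n)⟩ = g ⟨r n, hrn⟩ := by
          rw [← hπh]
          simp only [hπ, Function.comp_apply]
          congr 1
        rw [hval] at hlast
        simpa [SimpleGraph.mem_neighborFinset] using hlast
      · intro h hh h' hh' heq
        simp only [Finset.coe_filter, Set.mem_setOf_eq] at hh hh'
        funext i
        rcases Fin.eq_castSucc_or_eq_last i with ⟨i', rfl⟩ | rfl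
        · have := congrFun (hh.2.trans hh'.2.symm) i'
          simpa [hπ, Function.comp] using this
        · exact heq
    have hsub : s'.image π ⊆ (Finset.univ.filter (fun h : Fin n → W =>
        ∀ i : Fin n, 1 ≤ (i : ℕ) → ∀ j : Fin n, (j : ℕ) = r (i : ℕ) →
          G.Adj (h j) (h i))) := by
      intro g hg
      rw [Finset.mem_image] at hg
      obtain ⟨h, hh, rfl⟩ := hg
      simp only [Finset.mem_filter, Finset.mem_univ, true_and, hs'] at hh ⊢
      intro i hi j hj
      have := hh i.castSucc (by simpa using hi) j.castSucc (by simpa using hj)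
      simpa [hπ, Function.comp] using this
    calc s'.card ≤ Δ * (s'.image π).card := key
      _ ≤ Δ * (2 * G.edgeFinset.card * Δ ^ k) :=
          Nat.mul_le_mul_left Δ (le_trans (Finset.card_le_card hsub) ihn)
      _ = 2 * G.edgeFinset.card * Δ ^ (k + 1) := by
          rw [pow_succ]; ring

/-- If `S` is a connected sample graph on `p ≥ 2` vertices and `G` is a graph with
`m` edges and maximum degree at most `Δ`, then the number of injective graph
homomorphisms from `S` to `G` is at most `2·m·Δ^(p-2)`. -/
theorem stmt_11 {V W : Type} [Fintype V] [Fintype W] [DecidableEq W]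
    (S : SimpleGraph V) (hconn : S.Connected)
    (p : ℕ) (hp : Fintype.card V = p) (hp2 : 2 ≤ p)
    (G : SimpleGraph W) [DecidableRel G.Adj]
    (Δ : ℕ) (hΔ : ∀ v : W, G.degree v ≤ Δ) :
    Nat.card {f : S →g G // Function.Injective f} ≤
      2 * G.edgeFinset.card * Δ ^ (p - 2) := by
  obtain ⟨k, rfl⟩ : ∃ k, p = k + 2 := ⟨p - 2, by omega⟩
  rw [Nat.add_sub_cancel]
  obtain ⟨g, hginj, hgprop⟩ :=
    exists_order S hconn (k + 2) (by omega) (le_of_eq hp.symm)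
  have hbij : Function.Bijective g :=
    (Fintype.bijective_iff_injective_and_card g).2 ⟨hginj, by simp [hp]⟩
  set e : Fin (k + 2) ≃ V := Equiv.ofBijective g hbij with he
  set r : ℕ → ℕ := fun i =>
    if h : i < k + 2 ∧ 1 ≤ i then (Classical.choose (hgprop ⟨i, h.1⟩ h.2)).val
    else i - 1 with hrdef
  have hr : ∀ i, 1 ≤ i → r i < i := by
    intro i hi
    by_cases h : i < k + 2 ∧ 1 ≤ i
    · have hspec := Classical.choose_spec (hgprop ⟨i, h.1⟩ h.2)
      have := hspec.1
      simp only [hrdef, dif_pos h]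
      exact this
    · simp only [hrdef, dif_neg h]
      omega
  set A := (Finset.univ.filter (fun h : Fin (k + 2) → W =>
      ∀ i : Fin (k + 2), 1 ≤ (i : ℕ) → ∀ j : Fin (k + 2), (j : ℕ) = r (i : ℕ) →
        G.Adj (h j) (h i))) with hA
  have hmem : ∀ f : {f : S →g G // Function.Injective f},
      (fun i => (f : S →g G) (e i)) ∈ A := by
    intro f
    simp only [hA, Finset.mem_filter, Finset.mem_univ, true_and]
    intro i hi j hj
    have hic : ((i : ℕ) < k + 2 ∧ 1 ≤ (i : ℕ)) := ⟨i.isLt, hi⟩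
    have hspec := Classical.choose_spec (hgprop ⟨(i : ℕ), i.isLt⟩ hi)
    have hjeq : j = Classical.choose (hgprop ⟨(i : ℕ), i.isLt⟩ hi) := by
      apply Fin.ext
      rw [hj, hrdef]
      simp only [dif_pos hic]
    subst hjeq
    exact (f : S →g G).map_adj hspec.2
  set Φ : {f : S →g G // Function.Injective f} → {h : Fin (k + 2) → W // h ∈ A} :=
    fun f => ⟨fun i => (f : S →g G) (e i), hmem f⟩ with hΦ
  have hΦinj : Function.Injective Φ := by
    intro f f' hff
    have hcoe : (fun i => (f : S →g G) (e i)) = (fun i => (f' : S →g G) (e i)) :=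
      congrArg Subtype.val hff
    apply Subtype.ext
    apply DFunLike.ext
    intro v
    obtain ⟨i, rfl⟩ := e.surjective v
    exact congrFun hcoe i
  calc Nat.card {f : S →g G // Function.Injective f}
      ≤ Nat.card {h : Fin (k + 2) → W // h ∈ A} :=
        Nat.card_le_card_of_injective Φ hΦinj
    _ = A.card := Nat.card_eq_finsetCard A
    _ ≤ 2 * G.edgeFinset.card * Δ ^ k := count_lemma G Δ hΔ r hr k
end

section
/- Let p be an odd prime. On the set of nonconstant functions s : ZMod p → Bool (those with s(i) ≠ s(j) for some i, j), consider the relation s ≈ t defined by: there exists c ∈ ZMod p such that either t(i) = s(i + c) for all i (a rotation), or t(i) = ¬ s(c − i) for all i (a flip). Then this relation is an equivalence relation, every equivalence class has exactly 2p elements, and hence the number of equivalence classes multiplied by 2p equals 2^p − 2. -/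
namespace Stmt14Aux

variable {p : ℕ}

/-- If a function on `ZMod p` (p prime) is periodic with nonzero period, it is constant. -/
lemma const_of_period (hp : p.Prime) {s : ZMod p → Bool} {c : ZMod p} (hc : c ≠ 0)
    (h : ∀ i, s (i + c) = s i) : ∀ i j, s i = s j := by
  haveI : Fact p.Prime := ⟨hp⟩
  have key : ∀ (n : ℕ) (i : ZMod p), s (i + n • c) = s i := by
    intro n
    induction n with
    | zero => simp
    | succ n ih =>
      intro i
      rw [succ_nsmul, ← add_assoc, show i + n • c + c = (i + c) + n • c by ring, ih, h]
  intro i j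
  have hj : j = i + (((j - i) / c).val) • c := by
    rw [nsmul_eq_mul, ZMod.natCast_val, ZMod.cast_id, div_mul_cancel₀ _ hc]; ring
  rw [hj, key]

lemma two_ne_zero'' (hp : p.Prime) (hodd : Odd p) : (2 : ZMod p) ≠ 0 := by
  intro h
  rw [show (2 : ZMod p) = ((2 : ℕ) : ZMod p) by norm_cast,
    ZMod.natCast_eq_zero_iff] at h
  have : p = 2 := (Nat.prime_dvd_prime_iff_eq hp Nat.prime_two).mp h
  rw [this] at hodd
  simp [Nat.odd_iff] at hodd

lemma rot_inj (hp : p.Prime) {s : ZMod p → Bool} (hnc : ∃ i j, s i ≠ s j)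
    {c c' : ZMod p} (h : ∀ i, s (i + c) = s (i + c')) : c = c' := by
  by_contra hne
  have hcc : c - c' ≠ 0 := sub_ne_zero.mpr hne
  have hper : ∀ j, s (j + (c - c')) = s j := by
    intro j
    rw [show j + (c - c') = (j - c') + c by ring, h, show j - c' + c' = j by ring]
  obtain ⟨i, j, hij⟩ := hnc
  exact hij (const_of_period hp hcc hper i j)

lemma flp_inj (hp : p.Prime) {s : ZMod p → Bool} (hnc : ∃ i j, s i ≠ s j)
    {c c' : ZMod p} (h : ∀ i, s (c - i) = s (c' - i)) : c = c' := by
  by_contra hne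
  have hcc : c - c' ≠ 0 := sub_ne_zero.mpr hne
  have hper : ∀ j, s (j + (c - c')) = s j := by
    intro j
    have := h (c' - j)
    rwa [show c - (c' - j) = j + (c - c') by ring, show c' - (c' - j) = j by ring] at this
  obtain ⟨i, j, hij⟩ := hnc
  exact hij (const_of_period hp hcc hper i j)

lemma rot_ne_flp (hp : p.Prime) (hodd : Odd p) {s : ZMod p → Bool}
    {c d : ZMod p} (h : ∀ i, s (i + c) = ! s (d - i)) : False := by
  haveI : Fact p.Prime := ⟨hp⟩
  have h2 : (2 : ZMod p) ≠ 0 := two_ne_zero'' hp hodd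
  set x := (d + c) * (2 : ZMod p)⁻¹ with hx
  have hxx : x + x = d + c := by
    rw [hx]; field_simp; ring
  have hh := h (x - c)
  rw [show x - c + c = x by ring, show d - (x - c) = x by linear_combination -hxx] at hh
  simp at hh

/-- The dihedral "orbit map". -/
def g (s : ZMod p → Bool) (cb : ZMod p × Bool) : ZMod p → Bool :=
  cond cb.2 (fun i => ! s (cb.1 - i)) (fun i => s (i + cb.1))

lemma g_nonconst (s : ZMod p → Bool) (hnc : ∃ i j, s i ≠ s j) (cb : ZMod p × Bool) :
    ∃ i j, g s cb i ≠ g s cb j := by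
  obtain ⟨a, b, hab⟩ := hnc
  obtain ⟨c, bb⟩ := cb
  cases bb
  · exact ⟨a - c, b - c, by
      simpa [g, show a - c + c = a by ring, show b - c + c = b by ring] using hab⟩
  · refine ⟨c - a, c - b, ?_⟩
    simp only [g, cond_true, show c - (c - a) = a by ring, show c - (c - b) = b by ring]
    exact fun h => hab (Bool.not_inj h)

lemma g_inj (hp : p.Prime) (hodd : Odd p) {s : ZMod p → Bool}
    (hnc : ∃ i j, s i ≠ s j) : Function.Injective (g s) := by
  rintro ⟨c, bc⟩ ⟨d, bd⟩ h
  have h' : ∀ i, g s (c, bc) i = g s (d, bd) i := fun i => congrFun h i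
  cases bc <;> cases bd
  · simp only [Prod.mk.injEq, and_true]
    exact rot_inj hp hnc h'
  · exact (rot_ne_flp hp hodd h').elim
  · exact (rot_ne_flp hp hodd (fun i => (h' i).symm)).elim
  · simp only [Prod.mk.injEq, and_true]
    exact flp_inj hp hnc (fun i => Bool.not_inj (h' i))

lemma orbit_card (hp : p.Prime) (hodd : Odd p)
    (s : {s : ZMod p → Bool // ∃ i j, s i ≠ s j}) :
    Nat.card {t : {s : ZMod p → Bool // ∃ i j, s i ≠ s j} //
      ∃ c : ZMod p, (∀ i, t.1 i = s.1 (i + c)) ∨ (∀ i, t.1 i = ! s.1 (c - i))} = 2 * p := by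
  haveI : NeZero p := ⟨hp.ne_zero⟩
  have hrel : ∀ cb : ZMod p × Bool,
      ∃ c : ZMod p, (∀ i, g s.1 cb i = s.1 (i + c)) ∨ (∀ i, g s.1 cb i = ! s.1 (c - i)) := by
    rintro ⟨c, bb⟩
    cases bb
    · exact ⟨c, Or.inl fun i => rfl⟩
    · exact ⟨c, Or.inr fun i => rfl⟩
  let f : ZMod p × Bool → {t : {s : ZMod p → Bool // ∃ i j, s i ≠ s j} //
      ∃ c : ZMod p, (∀ i, t.1 i = s.1 (i + c)) ∨ (∀ i, t.1 i = ! s.1 (c - i))} :=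
    fun cb => ⟨⟨g s.1 cb, g_nonconst s.1 s.2 cb⟩, hrel cb⟩
  have hbij : Function.Bijective f := by
    constructor
    · intro cb cb' h
      exact g_inj hp hodd s.2 (congrArg (fun t => t.1.1) h)
    · rintro ⟨⟨t, hnct⟩, c, (h | h)⟩
      · exact ⟨(c, false), Subtype.ext (Subtype.ext (funext fun i => (h i).symm))⟩
      · exact ⟨(c, true), Subtype.ext (Subtype.ext (funext fun i => (h i).symm))⟩
  rw [Nat.card_congr (Equiv.ofBijective f hbij).symm, Nat.card_prod, Nat.card_zmod]
  simp [mul_comm]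

lemma card_S (hp : p.Prime) :
    Nat.card {s : ZMod p → Bool // ∃ i j, s i ≠ s j} = 2 ^ p - 2 := by
  haveI : NeZero p := ⟨hp.ne_zero⟩
  classical
  rw [Nat.card_eq_fintype_card]
  have e1 : {s : ZMod p → Bool // ∃ i j, s i ≠ s j}
      ≃ {s : ZMod p → Bool // ¬ ∀ i j, s i = s j} :=
    Equiv.subtypeEquivRight (fun s => by push_neg; rfl)
  rw [Fintype.card_congr e1, Fintype.card_subtype_compl]
  have e2 : {s : ZMod p → Bool // ∀ i j, s i = s j} ≃ Bool :=
    { toFun := fun s => s.1 0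
      invFun := fun b => ⟨fun _ => b, fun _ _ => rfl⟩
      left_inv := fun s => Subtype.ext (funext fun i => s.2 0 i)
      right_inv := fun b => rfl }
  rw [Fintype.card_congr e2]
  simp [ZMod.card]

end Stmt14Aux

/-- For an odd prime `p`, the rotation/flip relation on nonconstant orientations
`s : ZMod p → Bool` is an equivalence relation, every equivalence class has
exactly `2p` elements, and the number of classes times `2p` equals `2^p - 2`. -/
theorem stmt_14 (p : ℕ) (hp : p.Prime) (hodd : Odd p) :
    Equivalence (fun s t : {s : ZMod p → Bool // ∃ i j, s i ≠ s j} =>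
      ∃ c : ZMod p, (∀ i, t.1 i = s.1 (i + c)) ∨ (∀ i, t.1 i = ! s.1 (c - i))) ∧
    (∀ s : {s : ZMod p → Bool // ∃ i j, s i ≠ s j},
      Nat.card {t : {s : ZMod p → Bool // ∃ i j, s i ≠ s j} //
        ∃ c : ZMod p, (∀ i, t.1 i = s.1 (i + c)) ∨ (∀ i, t.1 i = ! s.1 (c - i))}
        = 2 * p) ∧
    Nat.card (Quot (fun s t : {s : ZMod p → Bool // ∃ i j, s i ≠ s j} =>
        ∃ c : ZMod p, (∀ i, t.1 i = s.1 (i + c)) ∨ (∀ i, t.1 i = ! s.1 (c - i))))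
      * (2 * p) = 2 ^ p - 2 := by
  haveI : NeZero p := ⟨hp.ne_zero⟩
  classical
  have hequiv : Equivalence (fun s t : {s : ZMod p → Bool // ∃ i j, s i ≠ s j} =>
      ∃ c : ZMod p, (∀ i, t.1 i = s.1 (i + c)) ∨ (∀ i, t.1 i = ! s.1 (c - i))) := by
    constructor
    · intro s; exact ⟨0, Or.inl fun i => by rw [add_zero]⟩
    · rintro s t ⟨c, h | h⟩
      · exact ⟨-c, Or.inl fun i => by rw [h, show i + -c + c = i by ring]⟩
      · exact ⟨c, Or.inr fun i => by rw [h, show c - (c - i) = i by ring, Bool.not_not]⟩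
    · rintro s t u ⟨c, h1 | h1⟩ ⟨d, h2 | h2⟩
      · exact ⟨c + d, Or.inl fun i => by rw [h2, h1, show i + d + c = i + (c + d) by ring]⟩
      · exact ⟨c + d, Or.inr fun i => by rw [h2, h1, show d - i + c = c + d - i by ring]⟩
      · exact ⟨c - d, Or.inr fun i => by rw [h2, h1, show c - (i + d) = c - d - i by ring]⟩
      · exact ⟨c - d, Or.inl fun i => by
          rw [h2, h1, Bool.not_not, show c - (d - i) = i + (c - d) by ring]⟩
  refine ⟨hequiv, Stmt14Aux.orbit_card hp hodd, ?_⟩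
  set R : {s : ZMod p → Bool // ∃ i j, s i ≠ s j}
      → {s : ZMod p → Bool // ∃ i j, s i ≠ s j} → Prop :=
    fun s t => ∃ c : ZMod p, (∀ i, t.1 i = s.1 (i + c)) ∨ (∀ i, t.1 i = ! s.1 (c - i))
    with hR
  haveI : Fintype (Quot R) := Fintype.ofFinite _
  have key : Nat.card {s : ZMod p → Bool // ∃ i j, s i ≠ s j}
      = Nat.card (Quot R) * (2 * p) := by
    rw [Nat.card_congr (Equiv.sigmaFiberEquiv (Quot.mk R)).symm, Nat.card_eq_fintype_card,
      Fintype.card_sigma]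
    have hfib : ∀ q : Quot R, Fintype.card {s // Quot.mk R s = q} = 2 * p := by
      intro q
      have e2 : {s // Quot.mk R s = q} ≃ {t // R q.out t} :=
        Equiv.subtypeEquivRight (fun t => by
          nth_rewrite 1 [← Quot.out_eq q]
          rw [Quot.eq]
          exact ⟨fun h => hequiv.symm (hequiv.eqvGen_iff.mp h),
            fun h => Relation.EqvGen.rel _ _ (hequiv.symm h)⟩)
      rw [Fintype.card_congr e2, ← Nat.card_eq_fintype_card]
      exact Stmt14Aux.orbit_card hp hodd q.out
    rw [Finset.sum_congr rfl (fun q _ => hfib q), Finset.sum_const, smul_eq_mul,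
      Finset.card_univ, ← Nat.card_eq_fintype_card]
  rw [← key, Stmt14Aux.card_S hp]
end

section
/- Let α be a finite type and let R₁, R₂, R₃, R₄, R₅ be finite sets of ordered pairs over α. Then the number of 5-tuples (a, b, c, d, e) ∈ α⁵ with (a,b) ∈ R₁, (b,c) ∈ R₂, (c,d) ∈ R₃, (d,e) ∈ R₄, and (e,a) ∈ R₅ is at most |R₁| · |R₃| · |R₅|. -/
/-- The output of the cyclic 5-way join
`R₁(A,B) ⋈ R₂(B,C) ⋈ R₃(C,D) ⋈ R₄(D,E) ⋈ R₅(E,A)` has size at most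
`|R₁| · |R₃| · |R₅|`. -/
theorem stmt_15 {α : Type} [Fintype α] [DecidableEq α]
    (R₁ R₂ R₃ R₄ R₅ : Finset (α × α)) :
    Nat.card {t : α × α × α × α × α //
        (t.1, t.2.1) ∈ R₁ ∧ (t.2.1, t.2.2.1) ∈ R₂ ∧ (t.2.2.1, t.2.2.2.1) ∈ R₃ ∧
        (t.2.2.2.1, t.2.2.2.2) ∈ R₄ ∧ (t.2.2.2.2, t.1) ∈ R₅} ≤
      R₁.card * R₃.card * R₅.card := by
  have h : Nat.card {t : α × α × α × α × α //
        (t.1, t.2.1) ∈ R₁ ∧ (t.2.1, t.2.2.1) ∈ R₂ ∧ (t.2.2.1, t.2.2.2.1) ∈ R₃ ∧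
        (t.2.2.2.1, t.2.2.2.2) ∈ R₄ ∧ (t.2.2.2.2, t.1) ∈ R₅} ≤
      Nat.card (R₁ × R₃ × R₅) := by
    apply Nat.card_le_card_of_injective
      (fun t => (⟨(t.1.1, t.1.2.1), t.2.1⟩, ⟨(t.1.2.2.1, t.1.2.2.2.1), t.2.2.2.1⟩,
        ⟨(t.1.2.2.2.2, t.1.1), t.2.2.2.2.2⟩))
    rintro ⟨⟨a,b,c,d,e⟩,_⟩ ⟨⟨a',b',c',d',e'⟩,_⟩ h
    simp only [Prod.mk.injEq, Subtype.mk.injEq] at h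
    obtain ⟨⟨ha,hb⟩,⟨hc,hd⟩,he,_⟩ := h
    simp_all
  calc _ ≤ Nat.card (R₁ × R₃ × R₅) := h
    _ = R₁.card * R₃.card * R₅.card := by
        simp [Nat.card_prod, Nat.card_eq_finsetCard, mul_assoc]
end

section
/- For all positive integers a, b, c, d, e there exist a finite type α and finite sets R₁, R₂, R₃, R₄, R₅ of ordered pairs over α with |R₁| = a·b, |R₂| = b·c, |R₃| = c·d, |R₄| = d·e, |R₅| = e·a, such that the number of 5-tuples (v, w, x, y, z) ∈ α⁵ with (v,w) ∈ R₁, (w,x) ∈ R₂, (x,y) ∈ R₃, (y,z) ∈ R₄, (z,v) ∈ R₅ equals a·b·c·d·e; the square of this output size equals the product of the five relation sizes. -/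
/-!
Take five sets `S₁, …, S₅` of sizes `a, …, e` and let each relation be the full product
`Sᵢ × Sᵢ₊₁` (indices mod 5). Membership of a tuple in the join then splits into one membership
condition per coordinate, so the join is the product `S₁ × ⋯ × S₅`; the sets need not even be
disjoint, so all five can be initial segments of one `Fin n`.
-/

open Finset

theorem card_cyclicJoin_product {α : Type*} (S₁ S₂ S₃ S₄ S₅ : Finset α) :
    Nat.card {t : α × α × α × α × α //
        (t.1, t.2.1) ∈ S₁ ×ˢ S₂ ∧ (t.2.1, t.2.2.1) ∈ S₂ ×ˢ S₃ ∧
        (t.2.2.1, t.2.2.2.1) ∈ S₃ ×ˢ S₄ ∧ (t.2.2.2.1, t.2.2.2.2) ∈ S₄ ×ˢ S₅ ∧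
        (t.2.2.2.2, t.1) ∈ S₅ ×ˢ S₁}
      = #S₁ * #S₂ * #S₃ * #S₄ * #S₅ := by
  have join_eq_product : ∀ t : α × α × α × α × α,
      ((t.1, t.2.1) ∈ S₁ ×ˢ S₂ ∧ (t.2.1, t.2.2.1) ∈ S₂ ×ˢ S₃ ∧
        (t.2.2.1, t.2.2.2.1) ∈ S₃ ×ˢ S₄ ∧ (t.2.2.2.1, t.2.2.2.2) ∈ S₄ ×ˢ S₅ ∧
        (t.2.2.2.2, t.1) ∈ S₅ ×ˢ S₁) ↔ t ∈ S₁ ×ˢ S₂ ×ˢ S₃ ×ˢ S₄ ×ˢ S₅ := by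
    simp only [mem_product]
    tauto
  simp_rw [join_eq_product, Nat.card_eq_finsetCard, card_product, mul_assoc]

theorem stmt_16_general (a b c d e : ℕ) :
    ∃ (α : Type) (_ : Fintype α) (_ : DecidableEq α)
      (R₁ R₂ R₃ R₄ R₅ : Finset (α × α)),
      R₁.card = a * b ∧ R₂.card = b * c ∧ R₃.card = c * d ∧
      R₄.card = d * e ∧ R₅.card = e * a ∧
      Nat.card {t : α × α × α × α × α //
          (t.1, t.2.1) ∈ R₁ ∧ (t.2.1, t.2.2.1) ∈ R₂ ∧ (t.2.2.1, t.2.2.2.1) ∈ R₃ ∧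
          (t.2.2.2.1, t.2.2.2.2) ∈ R₄ ∧ (t.2.2.2.2, t.1) ∈ R₅}
        = a * b * c * d * e ∧
      (Nat.card {t : α × α × α × α × α //
          (t.1, t.2.1) ∈ R₁ ∧ (t.2.1, t.2.2.1) ∈ R₂ ∧ (t.2.2.1, t.2.2.2.1) ∈ R₃ ∧
          (t.2.2.2.1, t.2.2.2.2) ∈ R₄ ∧ (t.2.2.2.2, t.1) ∈ R₅}) ^ 2
        = R₁.card * R₂.card * R₃.card * R₄.card * R₅.card := by
  set n := a + b + c + d + e
  let S : ℕ → Finset (Fin n) := fun k => {i | (i : ℕ) < k}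
  have card_S : ∀ k ≤ n, #(S k) = k := fun k hk => by
    rw [Fin.card_filter_val_lt, min_eq_right hk]
  refine ⟨Fin n, inferInstance, inferInstance, S a ×ˢ S b, S b ×ˢ S c, S c ×ˢ S d,
    S d ×ˢ S e, S e ×ˢ S a, ?_⟩
  simp only [card_cyclicJoin_product, card_product, card_S a (by omega), card_S b (by omega),
    card_S c (by omega), card_S d (by omega), card_S e (by omega), true_and]
  ring

/-- For all positive `a, b, c, d, e` there are binary relations of sizes
`a·b, b·c, c·d, d·e, e·a` whose cyclic 5-way join has exactly `a·b·c·d·e`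
output tuples; the square of this output size is the product of the five
relation sizes. -/
theorem stmt_16 (a b c d e : ℕ) (ha : 0 < a) (hb : 0 < b) (hc : 0 < c)
    (hd : 0 < d) (he : 0 < e) :
    ∃ (α : Type) (_ : Fintype α) (_ : DecidableEq α)
      (R₁ R₂ R₃ R₄ R₅ : Finset (α × α)),
      R₁.card = a * b ∧ R₂.card = b * c ∧ R₃.card = c * d ∧
      R₄.card = d * e ∧ R₅.card = e * a ∧
      Nat.card {t : α × α × α × α × α //
          (t.1, t.2.1) ∈ R₁ ∧ (t.2.1, t.2.2.1) ∈ R₂ ∧ (t.2.2.1, t.2.2.2.1) ∈ R₃ ∧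
          (t.2.2.2.1, t.2.2.2.2) ∈ R₄ ∧ (t.2.2.2.2, t.1) ∈ R₅}
        = a * b * c * d * e ∧
      (Nat.card {t : α × α × α × α × α //
          (t.1, t.2.1) ∈ R₁ ∧ (t.2.1, t.2.2.1) ∈ R₂ ∧ (t.2.2.1, t.2.2.2.1) ∈ R₃ ∧
          (t.2.2.2.1, t.2.2.2.2) ∈ R₄ ∧ (t.2.2.2.2, t.1) ∈ R₅}) ^ 2
        = R₁.card * R₂.card * R₃.card * R₄.card * R₅.card :=
  stmt_16_general a b c d e
end

section
/- For all real numbers w, x, y, z, k with w > 0, x > 0, y > 0, z > 0 and w·x·y·z = k, we have y·z + 2·w·z + 2·w·x + x·y ≥ 4·√(2k). Moreover this bound is attained: for x = z = 1, w = √(k/2), and y = √(2k) (which satisfy the product constraint), the left side equals 4·√(2k). -/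
private lemma amgm (a b : ℝ) (ha : 0 ≤ a) (hb : 0 ≤ b) :
    2 * Real.sqrt (a * b) ≤ a + b := by
  have h := two_mul_le_add_sq (Real.sqrt a) (Real.sqrt b)
  rw [Real.sq_sqrt ha, Real.sq_sqrt hb] at h
  rw [Real.sqrt_mul ha, ← mul_assoc]
  exact h

/-- For positive shares `w, x, y, z` with `w·x·y·z = k`, the communication cost
`y·z + 2·w·z + 2·w·x + x·y` for the square's conjunctive queries is at least
`4·√(2k)`, and this bound is attained at `x = z = 1`, `w = √(k/2)`, `y = √(2k)`. -/
theorem stmt_17 :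
    (∀ w x y z k : ℝ, 0 < w → 0 < x → 0 < y → 0 < z → w * x * y * z = k →
      4 * Real.sqrt (2 * k) ≤ y * z + 2 * w * z + 2 * w * x + x * y) ∧
    (∀ k : ℝ, 0 < k →
      Real.sqrt (k / 2) * 1 * Real.sqrt (2 * k) * 1 = k ∧
      Real.sqrt (2 * k) * 1 + 2 * Real.sqrt (k / 2) * 1 +
          2 * Real.sqrt (k / 2) * 1 + 1 * Real.sqrt (2 * k)
        = 4 * Real.sqrt (2 * k)) := by
  constructor
  · intro w x y z k hw hx hy hz hk
    have h1 : 2 * Real.sqrt (y * z * (2 * w * x)) ≤ y * z + 2 * w * x :=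
      amgm _ _ (by positivity) (by positivity)
    have h2 : 2 * Real.sqrt (2 * w * z * (x * y)) ≤ 2 * w * z + x * y :=
      amgm _ _ (by positivity) (by positivity)
    have e1 : y * z * (2 * w * x) = 2 * k := by rw [← hk]; ring
    have e2 : 2 * w * z * (x * y) = 2 * k := by rw [← hk]; ring
    rw [e1] at h1; rw [e2] at h2
    linarith
  · intro k hk
    have hk2 : (0:ℝ) ≤ 2 * k := by linarith
    have e1 : Real.sqrt (k / 2) * Real.sqrt (2 * k) = k := by
      rw [← Real.sqrt_mul (by linarith)]
      rw [show k / 2 * (2 * k) = k ^ 2 by ring, Real.sqrt_sq hk.le]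
    have e2 : Real.sqrt (k / 2) = Real.sqrt (2 * k) / 2 := by
      have h4 : Real.sqrt 4 = 2 := by
        rw [show (4:ℝ) = 2 ^ 2 by norm_num, Real.sqrt_sq two_pos.le]
      rw [show (2:ℝ) * k = 4 * (k / 2) by ring,
        Real.sqrt_mul (by norm_num : (0:ℝ) ≤ 4), h4]
      ring
    constructor
    · rw [mul_one, mul_one, e1]
    · rw [e2]; ring
end
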